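/- For all Ω, λ, ξ₁, ζ, m ∈ ℝ and η ∈ {−1, 1}, the edge Hamiltonian symbol H_e(ξ₁, ζ; m) = Ω σ₃ ⊗ I₂ + I₂ ⊗ (ξ₁ σ₁ + η ζ σ₂) + (λ/2)(σ₁ ⊗ σ₁ + m σ₂ ⊗ σ₂) satisfies K H_e(ξ₁, ζ; m) K = −H_e(−ξ₁, ζ; m), where K = σ₂ ⊗ σ₁ (note K² = I₄). Consequently the edge-state dispersion is symmetric: E is an eigenvalue of H_e(ξ₁, ζ; m) if and only if −E is an eigenvalue of H_e(−ξ₁, ζ; m). -/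
import Mathlib


open Matrix
open scoped Kronecker

/-- The first Pauli matrix `σ₁ = [[0,1],[1,0]]`. -/
noncomputable def pauli1 : Matrix (Fin 2) (Fin 2) ℂ := !![0, 1; 1, 0]

/-- The second Pauli matrix `σ₂ = [[0,−i],[i,0]]`. -/
noncomputable def pauli2 : Matrix (Fin 2) (Fin 2) ℂ := !![0, -Complex.I; Complex.I, 0]

/-- The third Pauli matrix `σ₃ = [[1,0],[0,−1]]`. -/
noncomputable def pauli3 : Matrix (Fin 2) (Fin 2) ℂ := !![1, 0; 0, -1]

/-- The 2×2 identity. -/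
noncomputable def I2 : Matrix (Fin 2) (Fin 2) ℂ := 1

/-- The 4×4 symbol of the gated tBLG interface (edge) Hamiltonian:
`H_e(ξ₁, ζ; m) = Ω σ₃ ⊗ I₂ + I₂ ⊗ (ξ₁ σ₁ + η ζ σ₂) + (λ/2)(σ₁ ⊗ σ₁ + m σ₂ ⊗ σ₂)`. -/
noncomputable def He (Ω lam η ξ₁ ζ m : ℝ) :
    Matrix (Fin 2 × Fin 2) (Fin 2 × Fin 2) ℂ :=
  (Ω : ℂ) • (pauli3 ⊗ₖ I2) +
    I2 ⊗ₖ ((ξ₁ : ℂ) • pauli1 + ((η * ζ : ℝ) : ℂ) • pauli2) +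
    ((lam / 2 : ℝ) : ℂ) • (pauli1 ⊗ₖ pauli1 + (m : ℂ) • (pauli2 ⊗ₖ pauli2))


private lemma I3' : Complex.I ^ 3 = -Complex.I := by
  rw [pow_succ, Complex.I_sq]; ring

set_option maxHeartbeats 2000000 in
private lemma He_conj (Ω lam ξ₁ ζ m η : ℝ) :
    (pauli2 ⊗ₖ pauli1) * He Ω lam η ξ₁ ζ m * (pauli2 ⊗ₖ pauli1) =
      -He Ω lam η (-ξ₁) ζ m := by
  ext ⟨i,j⟩ ⟨k,l⟩
  fin_cases i <;> fin_cases j <;> fin_cases k <;> fin_cases l <;>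
    simp [He, pauli1, pauli2, pauli3, I2, Matrix.mul_apply, Fintype.sum_prod_type,
      Fin.sum_univ_two, kroneckerMap_apply, Matrix.one_apply] <;>
    ring_nf <;> simp [Complex.I_sq, I3'] <;> ring

private lemma K_sq :
    (pauli2 ⊗ₖ pauli1) * (pauli2 ⊗ₖ pauli1) =
      (1 : Matrix (Fin 2 × Fin 2) (Fin 2 × Fin 2) ℂ) := by
  ext ⟨i,j⟩ ⟨k,l⟩
  fin_cases i <;> fin_cases j <;> fin_cases k <;> fin_cases l <;>
    simp [pauli1, pauli2, Matrix.mul_apply, Fintype.sum_prod_type,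
      Fin.sum_univ_two, kroneckerMap_apply, Matrix.one_apply, Prod.ext_iff]

/-- With `K = σ₂ ⊗ σ₁` (note `K² = I₄`), the edge symbol satisfies
`K H_e(ξ₁, ζ; m) K = −H_e(−ξ₁, ζ; m)`; consequently the edge-state dispersion is
symmetric: `E` is an eigenvalue of `H_e(ξ₁, ζ; m)` iff `−E` is an eigenvalue of
`H_e(−ξ₁, ζ; m)`. -/
theorem He_chiral_symmetry (Ω lam ξ₁ ζ m η : ℝ) (hη : η ∈ ({-1, 1} : Set ℝ)) :
    (pauli2 ⊗ₖ pauli1) * He Ω lam η ξ₁ ζ m * (pauli2 ⊗ₖ pauli1) =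
      -He Ω lam η (-ξ₁) ζ m ∧
    (pauli2 ⊗ₖ pauli1) * (pauli2 ⊗ₖ pauli1) = 1 ∧
    (∀ E : ℂ, E ∈ spectrum ℂ (He Ω lam η ξ₁ ζ m) ↔
      -E ∈ spectrum ℂ (He Ω lam η (-ξ₁) ζ m)) := by
  refine ⟨He_conj Ω lam ξ₁ ζ m η, K_sq, fun E => ?_⟩
  set K := pauli2 ⊗ₖ pauli1
  let u : (Matrix (Fin 2 × Fin 2) (Fin 2 × Fin 2) ℂ)ˣ := ⟨K, K, K_sq, K_sq⟩
  have hconj : spectrum ℂ (-He Ω lam η (-ξ₁) ζ m) = spectrum ℂ (He Ω lam η ξ₁ ζ m) := by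
    rw [← He_conj Ω lam ξ₁ ζ m η]
    exact spectrum.units_conjugate (u := u)
  have hneg : spectrum ℂ (-He Ω lam η (-ξ₁) ζ m) = -spectrum ℂ (He Ω lam η (-ξ₁) ζ m) :=
    (spectrum.neg_eq _).symm
  constructor
  · intro hE
    rw [← hconj, hneg, Set.mem_neg] at hE
    simpa using hE
  · intro hE
    rw [← hconj, hneg, Set.mem_neg]
    simpa using hE
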